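/- For every prime p ≥ 5, if p is a Chebyshev prime, i.e., ∫_{ψ(p−1)}^{ψ(p)} dt/log t < 1, then ψ(p) > p. -/

import Mathlib

open scoped ArithmeticFunction

/-- The first Chebyshev function `θ(x) = ∑_{p ≤ x, p prime} log p`. -/
noncomputable def chebyshevTheta (x : ℝ) : ℝ :=
  ∑ p ∈ (Finset.range (⌊x⌋₊ + 1)).filter Nat.Prime, Real.log p

/-- The second Chebyshev function `ψ(x) = ∑_{n ≤ x} Λ(n)`. -/
noncomputable def chebyshevPsi (x : ℝ) : ℝ :=
  ∑ n ∈ Finset.range (⌊x⌋₊ + 1), Λ n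

/-- The prime counting function `π(x)`: the number of primes `≤ x`. -/
noncomputable def primePi (x : ℝ) : ℕ := Nat.primeCounting ⌊x⌋₊

/-- The `n`-th prime, with `nthPrime 1 = 2`, `nthPrime 2 = 3`, ... -/
noncomputable def nthPrime (n : ℕ) : ℕ := Nat.nth Nat.Prime (n - 1)

/-- The logarithmic integral `li(x)`, as a Cauchy principal value
`li(x) = lim_{ε→0⁺} (∫_0^{1-ε} dt/log t + ∫_{1+ε}^x dt/log t)`. -/
noncomputable def li (x : ℝ) : ℝ :=
  Filter.limUnder (nhdsWithin 0 (Set.Ioi (0 : ℝ))) fun ε =>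
    (∫ t in (0 : ℝ)..(1 - ε), 1 / Real.log t) + ∫ t in (1 + ε)..x, 1 / Real.log t

/-- The jump `J_n = ∫_{θ(p_n)}^{θ(p_{n+1})} dt / log t` of `li ∘ θ`. -/
noncomputable def J (n : ℕ) : ℝ :=
  ∫ t in chebyshevTheta (nthPrime n)..chebyshevTheta (nthPrime (n + 1)), 1 / Real.log t

/-- The jump `K_n = ∫_{ψ(p_{n+1}-1)}^{ψ(p_{n+1})} dt / log t` of `li ∘ ψ` at the prime `p_{n+1}`. -/
noncomputable def K (n : ℕ) : ℝ :=
  ∫ t in chebyshevPsi ((nthPrime (n + 1) : ℝ) - 1)..chebyshevPsi (nthPrime (n + 1)),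
    1 / Real.log t

/-!
If `ψ(p) ≤ p`, then `1 / log t ≥ 1 / log p` on `[ψ(p - 1), ψ(p)]`, an interval of length
`Λ(p) = log p`, so the integral is at least `1`. For `p ≥ 5` the interval lies to the right of
`log 2 + log 3 > 1`, where `1 / log t` is positive and continuous.
-/

open Real

theorem chebyshevPsi_natCast_eq_add (n : ℕ) (hn : 1 ≤ n) :
    chebyshevPsi n = chebyshevPsi ((n : ℝ) - 1) + Λ n := by
  obtain ⟨m, rfl⟩ := Nat.exists_eq_add_of_le' hn
  have hfloor : ⌊((m + 1 : ℕ) : ℝ) - 1⌋₊ = m := by push_cast; simp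
  rw [chebyshevPsi, chebyshevPsi, hfloor, Nat.floor_natCast, Finset.sum_range_succ]

theorem log_six_le_chebyshevPsi {x : ℝ} (hx : 3 ≤ x) : log 6 ≤ chebyshevPsi x := by
  have hsub : ({2, 3} : Finset ℕ) ⊆ Finset.range (⌊x⌋₊ + 1) := by
    have : 3 ≤ ⌊x⌋₊ := Nat.le_floor (by exact_mod_cast hx)
    intro n hn
    simp only [Finset.mem_insert, Finset.mem_singleton] at hn
    simp only [Finset.mem_range]
    omega
  calc log 6 = ∑ n ∈ ({2, 3} : Finset ℕ), Λ n := by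
        rw [Finset.sum_pair (by norm_num),
          ArithmeticFunction.vonMangoldt_apply_prime Nat.prime_two,
          ArithmeticFunction.vonMangoldt_apply_prime Nat.prime_three,
          ← log_mul (by norm_num) (by norm_num)]
        norm_num
    _ ≤ chebyshevPsi x :=
        Finset.sum_le_sum_of_subset_of_nonneg hsub fun _ _ _ ↦ ArithmeticFunction.vonMangoldt_nonneg

theorem one_lt_chebyshevPsi {x : ℝ} (hx : 3 ≤ x) : 1 < chebyshevPsi x := by
  refine lt_of_lt_of_le ?_ (log_six_le_chebyshevPsi hx)
  rw [lt_log_iff_exp_lt (by norm_num)]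
  linarith [exp_one_lt_d9]

theorem sub_div_log_le_integral_one_div_log {a b c : ℝ} (ha : 1 < a) (hab : a ≤ b)
    (hbc : b ≤ c) : (b - a) / log c ≤ ∫ t in a..b, 1 / log t := by
  have hlog_pos : ∀ t ∈ Set.Icc a b, 0 < log t := fun t ht ↦ log_pos (ha.trans_le ht.1)
  have hcont : ContinuousOn (fun t ↦ 1 / log t) (Set.Icc a b) := fun t ht ↦
    (continuousAt_const.div (continuousAt_log (by linarith [ht.1]))
      (hlog_pos t ht).ne').continuousWithinAt
  calc (b - a) / log c = ∫ _ in a..b, 1 / log c := by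
        rw [intervalIntegral.integral_const, smul_eq_mul, mul_one_div]
    _ ≤ ∫ t in a..b, 1 / log t := by
        refine intervalIntegral.integral_mono_on hab intervalIntegrable_const
          (hcont.intervalIntegrable_of_Icc hab) fun t ht ↦ ?_
        exact one_div_le_one_div_of_le (hlog_pos t ht)
          (log_le_log (by linarith [ht.1]) (ht.2.trans hbc))

theorem psi_gt_of_chebyshev_prime (p : ℕ) (hp : p.Prime) (h5 : 5 ≤ p)
    (h : (∫ t in chebyshevPsi ((p : ℝ) - 1)..chebyshevPsi p, 1 / Real.log t) < 1) :
    (p : ℝ) < chebyshevPsi p := by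
  by_contra! hle
  have hstep : chebyshevPsi p = chebyshevPsi ((p : ℝ) - 1) + log p := by
    rw [chebyshevPsi_natCast_eq_add p hp.one_lt.le, ArithmeticFunction.vonMangoldt_apply_prime hp]
  have hp5 : (5 : ℝ) ≤ p := by exact_mod_cast h5
  have hlog_pos : 0 < log p := log_pos (by linarith)
  have hpsi_gt_one : 1 < chebyshevPsi ((p : ℝ) - 1) := one_lt_chebyshevPsi (by linarith)
  have hlength : (chebyshevPsi p - chebyshevPsi ((p : ℝ) - 1)) / log p = 1 := by
    rw [hstep, add_sub_cancel_left, div_self hlog_pos.ne']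
  have hbound := sub_div_log_le_integral_one_div_log hpsi_gt_one (by linarith) hle
  linarith
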